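/- arXiv:2010.12383 — 4 statements merged into one kernel-verified Lean document; each statement's English description precedes it below -/
import Mathlib

section
/- Let (α, μ) and (β, ν) be σ-finite measure spaces and let p : α → β be measurable. Let g : β → ℝ≥0 be measurable such that the pushforward of μ under p equals ν.withDensity g, and let f : β → ℝ≥0 be measurable with f(x) = 0 for ν-almost every x with g(x) = 0 (absolute continuity of f with respect to g). Then the pushforward under p of the measure μ.withDensity (θ ↦ f(p(θ))/g(p(θ))) equals ν.withDensity f. -/
open MeasureTheory
open scoped ENNReal NNReal

lemma map_withDensity_comp {α β : Type*} [MeasurableSpace α] [MeasurableSpace β]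
    (μ : Measure α) (p : α → β) (hp : Measurable p) (h : β → ℝ≥0∞) (hh : Measurable h) :
    Measure.map p (μ.withDensity (h ∘ p)) = (Measure.map p μ).withDensity h := by
  ext s hs
  rw [Measure.map_apply hp hs, withDensity_apply _ (hp hs), withDensity_apply _ hs,
]
  exact (setLIntegral_map hs hh hp).symm

set_option maxHeartbeats 1000000 in
/-- Change of measure lemma: reweighting parameter draws by the Radon–Nikodym
ratio `f/g` evaluated at the model output `p θ` changes the induced (pushforward)
measure over outputs from `ν.withDensity g` to `ν.withDensity f`, provided `f`
vanishes (ν-a.e.) wherever `g` vanishes.  Division in `ℝ≥0` satisfies `x / 0 = 0`. -/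
theorem change_of_measure
    {α β : Type*} [MeasurableSpace α] [MeasurableSpace β]
    (μ : Measure α) (ν : Measure β) [SigmaFinite μ] [SigmaFinite ν]
    (p : α → β) (hp : Measurable p)
    (g : β → ℝ≥0) (hg : Measurable g)
    (hpush : Measure.map p μ = ν.withDensity (fun x => (g x : ℝ≥0∞)))
    (f : β → ℝ≥0) (hf : Measurable f)
    (habs : ∀ᵐ x ∂ν, g x = 0 → f x = 0) :
    Measure.map p (μ.withDensity (fun θ => ((f (p θ) / g (p θ) : ℝ≥0) : ℝ≥0∞)))
      = ν.withDensity (fun x => (f x : ℝ≥0∞)) := by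
  have hq : Measurable (fun x : β => ((f x / g x : ℝ≥0) : ℝ≥0∞)) :=
    (hf.div hg).coe_nnreal_ennreal
  have h1 : Measure.map p (μ.withDensity (fun θ => ((f (p θ) / g (p θ) : ℝ≥0) : ℝ≥0∞)))
      = (Measure.map p μ).withDensity (fun x => ((f x / g x : ℝ≥0) : ℝ≥0∞)) :=
    map_withDensity_comp μ p hp _ hq
  rw [h1, hpush, ← withDensity_mul _ hg.coe_nnreal_ennreal hq]
  refine withDensity_congr_ae ?_
  filter_upwards [habs] with x hx
  rcases eq_or_ne (g x) 0 with h0 | h0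
  · simp [h0, hx h0]
  · simp only [Pi.mul_apply]
    rw [← ENNReal.coe_mul, mul_div_cancel₀ _ h0]
end

section
/- Let (α, μ) and (β, ν) be σ-finite measure spaces and let p : α → β be measurable. Let g : β → ℝ≥0 be measurable such that the pushforward of μ under p equals ν.withDensity g, and let f : β → ℝ≥0 be measurable (no absolute continuity assumed). Then the pushforward under p of the measure μ.withDensity (θ ↦ f(p(θ))/g(p(θ))) equals ν.withDensity (x ↦ if g(x) = 0 then 0 else f(x)); that is, all target mass on the set {x : g(x) = 0} is lost by the reweighting. -/
open MeasureTheory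
open scoped ENNReal NNReal

/-- Without the absolute-continuity condition, the reweighted pushforward
reproduces the target density `f` only where `g` is nonzero: all mass of the
target on the set `{x : g x = 0}` is lost.  Division in `ℝ≥0` satisfies
`x / 0 = 0`. -/
theorem change_of_measure_without_absolute_continuity
    {α β : Type*} [MeasurableSpace α] [MeasurableSpace β]
    (μ : Measure α) (ν : Measure β) [SigmaFinite μ] [SigmaFinite ν]
    (p : α → β) (hp : Measurable p)
    (g : β → ℝ≥0) (hg : Measurable g)
    (hpush : Measure.map p μ = ν.withDensity (fun x => (g x : ℝ≥0∞)))
    (f : β → ℝ≥0) (hf : Measurable f) :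
    Measure.map p (μ.withDensity (fun θ => ((f (p θ) / g (p θ) : ℝ≥0) : ℝ≥0∞)))
      = ν.withDensity (fun x => if g x = 0 then 0 else (f x : ℝ≥0∞)) := by
  have hfg : Measurable (fun x : β => ((f x / g x : ℝ≥0) : ℝ≥0∞)) :=
    (hf.div hg).coe_nnreal_ennreal
  ext s hs
  rw [Measure.map_apply hp hs, withDensity_apply _ (hp hs),
    ← setLIntegral_map hs hfg hp, hpush, setLIntegral_withDensity_eq_setLIntegral_mul _ hg.coe_nnreal_ennreal hfg hs,
    withDensity_apply _ hs]
  refine lintegral_congr fun x => ?_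
  by_cases h : g x = 0
  · simp [h]
  · simp only [h, if_false, Pi.mul_apply]
    rw [← ENNReal.coe_mul, mul_div_cancel₀ _ h]
end

section
/- Let J ≥ 2, let 0 ≤ p₁ < p₂ < ⋯ < p_J ≤ 1, and let F : ℝ → ℝ be measurable and bounded (e.g., a cumulative distribution function). For a weight vector w ∈ ℝ^J with ∑_{j=1}^J w_j = 1, define the step function H_w(x) = ∑_{j : p_j ≤ x} w_j. Define Ŝ_j = (∫_{p_j}^{p_{j+1}} F(x) dx)/(p_{j+1} − p_j) for j = 1, …, J−1, and the weight vector ŵ by ŵ₁ = Ŝ₁, ŵ_j = Ŝ_j − Ŝ_{j−1} for 2 ≤ j ≤ J−1, and ŵ_J = 1 − ∑_{k=1}^{J−1} ŵ_k. Then for every w ∈ ℝ^J with ∑_{j=1}^J w_j = 1, ∫_0^1 (F(x) − H_ŵ(x))² dx ≤ ∫_0^1 (F(x) − H_w(x))² dx. -/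
open MeasureTheory intervalIntegral

lemma aux_ii {f : ℝ → ℝ} (hf : Measurable f)
    {C : ℝ} (hC : ∀ x, |f x| ≤ C) (a b : ℝ) :
    IntervalIntegrable f volume a b := by
  apply IntervalIntegrable.mono_fun' (g := fun _ => C) intervalIntegrable_const
    hf.aestronglyMeasurable
  exact Filter.Eventually.of_forall fun x => by simpa using hC x

lemma aux_congr {f g : ℝ → ℝ} {a b : ℝ} (hab : a ≤ b)
    (h : ∀ x ∈ Set.Ioo a b, f x = g x) :
    ∫ x in a..b, f x = ∫ x in a..b, g x := by
  apply intervalIntegral.integral_congr_ae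
  rw [MeasureTheory.ae_iff]
  refine measure_mono_null ?_ (measure_singleton b)
  intro x hx
  simp only [Set.mem_setOf_eq, Classical.not_imp, Set.uIoc_of_le hab, Set.mem_Ioc] at hx
  obtain ⟨⟨h1, h2⟩, hne⟩ := hx
  simp only [Set.mem_singleton_iff]
  by_contra hb
  exact hne (h x ⟨h1, lt_of_le_of_ne h2 hb⟩)

lemma aux_quad {F : ℝ → ℝ} (hF : Measurable F) {C : ℝ} (hC : ∀ x, |F x| ≤ C)
    {a b : ℝ} (hab : a < b) (c : ℝ) :
    ∫ x in a..b, (F x - (∫ t in a..b, F t) / (b - a)) ^ 2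
      ≤ ∫ x in a..b, (F x - c) ^ 2 := by
  have h1 : IntervalIntegrable F volume a b := aux_ii hF hC a b
  have h2 : IntervalIntegrable (fun x => (F x) ^ 2) volume a b := by
    refine aux_ii (hF.pow_const 2) (C := C ^ 2) (fun x => ?_) a b
    have := hC x
    rw [abs_pow]
    exact pow_le_pow_left₀ (abs_nonneg _) this 2
  set m := (∫ t in a..b, F t) / (b - a) with hm
  have hba : b - a ≠ 0 := by linarith
  have hI : ∫ t in a..b, F t = (b - a) * m := by
    rw [hm, mul_div_assoc', mul_comm, mul_div_assoc, div_self hba, mul_one]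
  have expand : ∀ d : ℝ, ∫ x in a..b, (F x - d) ^ 2
      = (∫ x in a..b, (F x) ^ 2) - 2 * d * (∫ t in a..b, F t) + (b - a) * d ^ 2 := by
    intro d
    have heq : (fun x => (F x - d) ^ 2)
        = fun x => ((F x) ^ 2 - (2 * d) * F x + d ^ 2) := by funext x; ring
    rw [heq]
    rw [intervalIntegral.integral_add (h2.sub (h1.const_mul _)) intervalIntegrable_const,
      intervalIntegral.integral_sub h2 (h1.const_mul _),
      intervalIntegral.integral_const_mul, intervalIntegral.integral_const]
    ring_nf
  rw [expand m, expand c, hI]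
  nlinarith [sq_nonneg (m - c), sub_pos.mpr hab]

/-- The minimum discrepancy-based empirical Radon–Nikodym derivative: among all
weight vectors `w` (indexed by `1, …, J`) summing to one, the weights `what`
defined by successive differencing of the interval averages
`Ŝ_j = (∫_{p_j}^{p_{j+1}} F)/(p_{j+1} − p_j)` (with the last weight chosen so
the total is one) minimize the integrated squared distance
`∫_0^1 (F(x) − H_w(x))² dx`, where `H_w(x) = ∑_{j : p_j ≤ x} w_j`. -/
theorem min_discrepancy_weights_optimal
    (J : ℕ) (hJ : 2 ≤ J) (p : ℕ → ℝ)
    (hmono : ∀ i j : ℕ, 1 ≤ i → i < j → j ≤ J → p i < p j)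
    (hp0 : 0 ≤ p 1) (hpJ : p J ≤ 1)
    (F : ℝ → ℝ) (hFmeas : Measurable F) (hFbdd : ∃ C : ℝ, ∀ x : ℝ, |F x| ≤ C)
    (what : ℕ → ℝ)
    (hwhat1 : what 1 = (∫ x in (p 1)..(p 2), F x) / (p 2 - p 1))
    (hwhatj : ∀ j : ℕ, 2 ≤ j → j ≤ J - 1 →
      what j = (∫ x in (p j)..(p (j + 1)), F x) / (p (j + 1) - p j)
        - (∫ x in (p (j - 1))..(p j), F x) / (p j - p (j - 1)))
    (hwhatJ : what J = 1 - ∑ k ∈ Finset.Icc 1 (J - 1), what k) :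
    ∀ w : ℕ → ℝ, (∑ j ∈ Finset.Icc 1 J, w j) = 1 →
      (∫ x in (0:ℝ)..1,
          (F x - ∑ j ∈ Finset.Icc 1 J, if p j ≤ x then what j else 0) ^ 2)
        ≤ ∫ x in (0:ℝ)..1,
            (F x - ∑ j ∈ Finset.Icc 1 J, if p j ≤ x then w j else 0) ^ 2 := by
  intro w hw
  obtain ⟨C, hC⟩ := hFbdd
  -- non-strict monotonicity
  have pmono : ∀ i j : ℕ, 1 ≤ i → i ≤ j → j ≤ J → p i ≤ p j := by
    intro i j h1 h2 h3
    rcases eq_or_lt_of_le h2 with rfl | h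
    · exact le_refl _
    · exact (hmono i j h1 h h3).le
  -- grid points
  set q : ℕ → ℝ := fun i => if i = 0 then 0 else if i ≤ J then p i else 1 with hqdef
  have hq0 : q 0 = 0 := by simp [hqdef]
  have hqi : ∀ i, 1 ≤ i → i ≤ J → q i = p i := by
    intro i h1 h2
    simp only [hqdef]
    rw [if_neg (by omega), if_pos h2]
  have hqJ1 : q (J + 1) = 1 := by
    simp only [hqdef]
    rw [if_neg (by omega), if_neg (by omega)]
  have hqmono : ∀ i, i ≤ J → q i ≤ q (i + 1) := by
    intro i hi
    rcases Nat.eq_zero_or_pos i with rfl | hpos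
    · rw [hq0, hqi 1 le_rfl (by omega)]; exact hp0
    · rcases eq_or_lt_of_le hi with rfl | hlt
      · rw [hqi i hpos le_rfl, hqJ1]; exact hpJ
      · rw [hqi i hpos (by omega), hqi (i + 1) (by omega) (by omega)]
        exact pmono i (i + 1) hpos (by omega) (by omega)
  -- measurability of the step function
  have hHmeas : ∀ v : ℕ → ℝ,
      Measurable (fun x => ∑ j ∈ Finset.Icc 1 J, if p j ≤ x then v j else 0) := by
    intro v
    apply Finset.measurable_sum
    intro j _
    exact Measurable.ite measurableSet_Ici measurable_const measurable_const
  have hHbdd : ∀ (v : ℕ → ℝ) (x : ℝ),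
      |∑ j ∈ Finset.Icc 1 J, if p j ≤ x then v j else 0| ≤ ∑ j ∈ Finset.Icc 1 J, |v j| := by
    intro v x
    refine (Finset.abs_sum_le_sum_abs _ _).trans (Finset.sum_le_sum fun j _ => ?_)
    split
    · exact le_refl _
    · simp
  -- integrability of the squared discrepancy
  have hG : ∀ (v : ℕ → ℝ) (a b : ℝ), IntervalIntegrable
      (fun x => (F x - ∑ j ∈ Finset.Icc 1 J, if p j ≤ x then v j else 0) ^ 2) volume a b := by
    intro v a b
    refine aux_ii ((hFmeas.sub (hHmeas v)).pow_const 2)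
      (C := (C + ∑ j ∈ Finset.Icc 1 J, |v j|) ^ 2) (fun x => ?_) a b
    rw [abs_pow]
    refine pow_le_pow_left₀ (abs_nonneg _) ?_ 2
    calc |F x - ∑ j ∈ Finset.Icc 1 J, if p j ≤ x then v j else 0|
        ≤ |F x| + |∑ j ∈ Finset.Icc 1 J, if p j ≤ x then v j else 0| := abs_sub _ _
      _ ≤ C + ∑ j ∈ Finset.Icc 1 J, |v j| := add_le_add (hC x) (hHbdd v x)
  -- step values
  have step_lo : ∀ (v : ℕ → ℝ) (x : ℝ), x ∈ Set.Ioo (0:ℝ) (p 1) →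
      (∑ j ∈ Finset.Icc 1 J, if p j ≤ x then v j else 0) = 0 := by
    intro v x hx
    apply Finset.sum_eq_zero
    intro j hj
    rw [Finset.mem_Icc] at hj
    rw [if_neg]
    exact not_le.mpr (lt_of_lt_of_le hx.2 (pmono 1 j le_rfl hj.1 hj.2))
  have step_hi : ∀ (v : ℕ → ℝ) (x : ℝ), x ∈ Set.Ioo (p J) 1 →
      (∑ j ∈ Finset.Icc 1 J, if p j ≤ x then v j else 0) = ∑ k ∈ Finset.Icc 1 J, v k := by
    intro v x hx
    apply Finset.sum_congr rfl
    intro j hj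
    rw [Finset.mem_Icc] at hj
    rw [if_pos]
    exact le_trans (pmono j J hj.1 hj.2 le_rfl) hx.1.le
  have step_mid : ∀ (v : ℕ → ℝ) (i : ℕ), 1 ≤ i → i ≤ J - 1 →
      ∀ x ∈ Set.Ioo (p i) (p (i + 1)),
      (∑ j ∈ Finset.Icc 1 J, if p j ≤ x then v j else 0) = ∑ k ∈ Finset.Icc 1 i, v k := by
    intro v i h1 h2 x hx
    have hsplit : Finset.Icc 1 J = Finset.Icc 1 i ∪ Finset.Icc (i + 1) J := by
      ext k
      simp only [Finset.mem_Icc, Finset.mem_union]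
      omega
    have hdisj : Disjoint (Finset.Icc 1 i) (Finset.Icc (i + 1) J) := by
      rw [Finset.disjoint_left]
      intro a ha hb
      rw [Finset.mem_Icc] at ha hb
      omega
    rw [hsplit, Finset.sum_union hdisj]
    have e1 : (∑ j ∈ Finset.Icc 1 i, if p j ≤ x then v j else 0)
        = ∑ j ∈ Finset.Icc 1 i, v j := by
      apply Finset.sum_congr rfl
      intro j hj
      rw [Finset.mem_Icc] at hj
      rw [if_pos]
      exact le_trans (pmono j i hj.1 hj.2 (by omega)) hx.1.le
    have e2 : (∑ j ∈ Finset.Icc (i + 1) J, if p j ≤ x then v j else 0) = 0 := by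
      apply Finset.sum_eq_zero
      intro j hj
      rw [Finset.mem_Icc] at hj
      rw [if_neg]
      exact not_le.mpr (lt_of_lt_of_le hx.2 (pmono (i + 1) j (by omega) hj.1 hj.2))
    rw [e1, e2, add_zero]
  -- decomposition of the integral
  have decomp : ∀ v : ℕ → ℝ,
      (∫ x in (0:ℝ)..1, (F x - ∑ j ∈ Finset.Icc 1 J, if p j ≤ x then v j else 0) ^ 2)
      = ∑ i ∈ Finset.range (J + 1),
          ∫ x in (q i)..(q (i + 1)),
            (F x - ∑ j ∈ Finset.Icc 1 J, if p j ≤ x then v j else 0) ^ 2 := by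
    intro v
    rw [intervalIntegral.sum_integral_adjacent_intervals (fun i _ => hG v (q i) (q (i + 1))),
      hq0, hqJ1]
  -- cumulative sums of what equal the interval means
  have hS : ∀ i : ℕ, 1 ≤ i → i ≤ J - 1 →
      (∑ k ∈ Finset.Icc 1 i, what k)
        = (∫ x in (p i)..(p (i + 1)), F x) / (p (i + 1) - p i) := by
    intro i
    induction i with
    | zero => omega
    | succ n ih =>
      intro h1 h2
      rcases Nat.eq_zero_or_pos n with rfl | hn
      · simpa using hwhat1
      · rw [Finset.sum_Icc_succ_top (by omega), ih hn (by omega),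
          hwhatj (n + 1) (by omega) h2]
        simp only [Nat.add_sub_cancel]
        ring
  have hSJ : (∑ k ∈ Finset.Icc 1 J, what k) = 1 := by
    calc (∑ k ∈ Finset.Icc 1 J, what k)
        = ∑ k ∈ Finset.Icc 1 ((J - 1) + 1), what k := by
          rw [show (J - 1) + 1 = J from by omega]
      _ = (∑ k ∈ Finset.Icc 1 (J - 1), what k) + what ((J - 1) + 1) :=
          Finset.sum_Icc_succ_top (by omega) _
      _ = 1 := by rw [show (J - 1) + 1 = J from by omega, hwhatJ]; ring
  -- per-piece comparison
  have hterm : ∀ i ∈ Finset.range (J + 1),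
      (∫ x in (q i)..(q (i + 1)),
        (F x - ∑ j ∈ Finset.Icc 1 J, if p j ≤ x then what j else 0) ^ 2)
      ≤ ∫ x in (q i)..(q (i + 1)),
          (F x - ∑ j ∈ Finset.Icc 1 J, if p j ≤ x then w j else 0) ^ 2 := by
    intro i hi
    rw [Finset.mem_range, Nat.lt_succ_iff] at hi
    rcases Nat.eq_zero_or_pos i with rfl | hpos
    · -- i = 0 : both equal the integral of (F x - 0)^2 over [0, p 1]
      apply le_of_eq
      rw [show (0:ℕ) + 1 = 1 from rfl, hq0, hqi 1 le_rfl (by omega)]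
      have e1 : (∫ x in (0:ℝ)..(p 1),
            (F x - ∑ j ∈ Finset.Icc 1 J, if p j ≤ x then what j else 0) ^ 2)
          = ∫ x in (0:ℝ)..(p 1), (F x - 0) ^ 2 :=
        aux_congr hp0 fun x hx => by rw [step_lo what x hx]
      have e2 : (∫ x in (0:ℝ)..(p 1),
            (F x - ∑ j ∈ Finset.Icc 1 J, if p j ≤ x then w j else 0) ^ 2)
          = ∫ x in (0:ℝ)..(p 1), (F x - 0) ^ 2 :=
        aux_congr hp0 fun x hx => by rw [step_lo w x hx]
      rw [e1, e2]
    · rcases eq_or_lt_of_le hi with rfl | hlt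
      · -- i = J : both equal the integral of (F x - 1)^2 over [p J, 1]
        apply le_of_eq
        rw [hqi i hpos le_rfl, hqJ1]
        have e1 : (∫ x in (p i)..(1:ℝ),
              (F x - ∑ j ∈ Finset.Icc 1 i, if p j ≤ x then what j else 0) ^ 2)
            = ∫ x in (p i)..(1:ℝ), (F x - 1) ^ 2 :=
          aux_congr hpJ fun x hx => by rw [step_hi what x hx, hSJ]
        have e2 : (∫ x in (p i)..(1:ℝ),
              (F x - ∑ j ∈ Finset.Icc 1 i, if p j ≤ x then w j else 0) ^ 2)
            = ∫ x in (p i)..(1:ℝ), (F x - 1) ^ 2 :=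
          aux_congr hpJ fun x hx => by rw [step_hi w x hx, hw]
        rw [e1, e2]
      · -- 1 ≤ i ≤ J - 1
        have hi1 : i ≤ J - 1 := by omega
        have hppi : p i < p (i + 1) := hmono i (i + 1) hpos (by omega) (by omega)
        rw [hqi i hpos (by omega), hqi (i + 1) (by omega) (by omega)]
        have e1 : (∫ x in (p i)..(p (i + 1)),
              (F x - ∑ j ∈ Finset.Icc 1 J, if p j ≤ x then what j else 0) ^ 2)
            = ∫ x in (p i)..(p (i + 1)),
                (F x - (∫ t in (p i)..(p (i + 1)), F t) / (p (i + 1) - p i)) ^ 2 :=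
          aux_congr hppi.le fun x hx => by
            rw [step_mid what i hpos hi1 x hx, hS i hpos hi1]
        have e2 : (∫ x in (p i)..(p (i + 1)),
              (F x - ∑ j ∈ Finset.Icc 1 J, if p j ≤ x then w j else 0) ^ 2)
            = ∫ x in (p i)..(p (i + 1)),
                (F x - ∑ k ∈ Finset.Icc 1 i, w k) ^ 2 :=
          aux_congr hppi.le fun x hx => by rw [step_mid w i hpos hi1 x hx]
        rw [e1, e2]
        exact aux_quad hFmeas hC hppi _
  rw [decomp what, decomp w]
  exact Finset.sum_le_sum hterm
end

section
/- Let I₁, …, I_B be pairwise disjoint sets partitioning the simulated and posterior prevalence values, let d₁, …, d_M be posterior samples and p₁, …, p_J simulated prevalences with strictly positive initial weights w₁, …, w_J, and suppose every bin containing at least one posterior sample also contains at least one simulated prevalence. Write m_b = #{m : d_m ∈ I_b}, W_b = ∑_{j : p_j ∈ I_b} w_j and W = ∑_{j=1}^J w_j, and for each simulation j lying in bin b define the histogram-reweighted weight u_j = (m_b/M) · (W/W_b) · w_j. Then for every bin b, ∑_{j : p_j ∈ I_b} u_j = (m_b/M) · ∑_{k=1}^J u_k; that is, after normalization the weighted simulations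 place exactly the proportion m_b/M of total mass in bin b, matching the histogram of the posterior samples. -/
open Finset Classical in

/-- Histogram-based empirical Radon–Nikodym reweighting: if each simulation `j`
lying in bin `b` receives weight `u j = (m_b/M) · (W/W_b) · w j`, where `m_b` is
the number of posterior samples in bin `b`, `W_b` the initial weight in bin `b`
and `W` the total initial weight, then for every bin `b` the reweighted
simulations place exactly the proportion `m_b/M` of the total mass in bin `b`,
matching the histogram of the posterior samples. -/
theorem histogram_reweighting_matches_histogram
    (B M J : ℕ) (I : Fin B → Set ℝ)
    (hdisj : Pairwise (fun b b' : Fin B => Disjoint (I b) (I b')))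
    (d : Fin M → ℝ) (p : Fin J → ℝ)
    (w : Fin J → ℝ) (hw : ∀ j, 0 < w j)
    (hd : ∀ m, ∃ b, d m ∈ I b) (hp : ∀ j, ∃ b, p j ∈ I b)
    (hcover : ∀ b : Fin B, (∃ m, d m ∈ I b) → ∃ j, p j ∈ I b)
    (u : Fin J → ℝ)
    (hu : ∀ (b : Fin B) (j : Fin J), p j ∈ I b →
      u j = (((Finset.univ.filter (fun m : Fin M => d m ∈ I b)).card : ℝ) / M)
        * ((∑ k, w k) / ∑ k ∈ Finset.univ.filter (fun k : Fin J => p k ∈ I b), w k)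
        * w j) :
    ∀ b : Fin B,
      (∑ j ∈ Finset.univ.filter (fun j : Fin J => p j ∈ I b), u j)
        = (((Finset.univ.filter (fun m : Fin M => d m ∈ I b)).card : ℝ) / M)
            * ∑ k, u k := by
  classical
  have huniq : ∀ {x : ℝ} {b b' : Fin B}, x ∈ I b → x ∈ I b' → b = b' := by
    intro x b b' h h'
    by_contra hne
    exact Set.disjoint_left.mp (hdisj hne) h h'
  have hT : ∀ c : Fin B,
      (∑ j ∈ Finset.univ.filter (fun j : Fin J => p j ∈ I c), u j)
        = (((Finset.univ.filter (fun m : Fin M => d m ∈ I c)).card : ℝ) / M) * ∑ k, w k := by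
    intro c
    by_cases hne : (Finset.univ.filter (fun j : Fin J => p j ∈ I c)).Nonempty
    · have hWb : 0 < ∑ k ∈ Finset.univ.filter (fun k : Fin J => p k ∈ I c), w k :=
        Finset.sum_pos (fun j _ => hw j) hne
      have hrw : ∀ j ∈ Finset.univ.filter (fun j : Fin J => p j ∈ I c),
          u j = (((Finset.univ.filter (fun m : Fin M => d m ∈ I c)).card : ℝ) / M)
            * ((∑ k, w k) / ∑ k ∈ Finset.univ.filter (fun k : Fin J => p k ∈ I c), w k)
            * w j := fun j hj => hu c j (Finset.mem_filter.mp hj).2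
      rw [Finset.sum_congr rfl hrw, ← Finset.mul_sum]
      field_simp
    · have h0 : (Finset.univ.filter (fun m : Fin M => d m ∈ I c)) = ∅ := by
        by_contra h
        obtain ⟨m, hm⟩ := Finset.nonempty_iff_ne_empty.mpr h
        obtain ⟨j, hj⟩ := hcover c ⟨m, (Finset.mem_filter.mp hm).2⟩
        exact hne ⟨j, Finset.mem_filter.mpr ⟨Finset.mem_univ j, hj⟩⟩
      rw [Finset.not_nonempty_iff_eq_empty.mp hne, Finset.sum_empty, h0]
      simp
  intro b
  by_cases hM : M = 0
  · have hmb : (Finset.univ.filter (fun m : Fin M => d m ∈ I b)) = ∅ := by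
      subst hM; simp
    rw [hT b, hmb]
    simp
  · -- total weight of u equals total weight of w
    set f : Fin J → Fin B := fun j => Classical.choose (hp j) with hf
    have hfmem : ∀ j, p j ∈ I (f j) := fun j => Classical.choose_spec (hp j)
    have hfilt : ∀ c : Fin B, Finset.univ.filter (fun j : Fin J => p j ∈ I c)
        = Finset.univ.filter (fun j : Fin J => f j = c) := by
      intro c
      ext j
      simp only [Finset.mem_filter, Finset.mem_univ, true_and]
      constructor
      · intro h; exact huniq (hfmem j) h
      · intro h; rw [← h]; exact hfmem j
    set g : Fin M → Fin B := fun m => Classical.choose (hd m) with hg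
    have hgmem : ∀ m, d m ∈ I (g m) := fun m => Classical.choose_spec (hd m)
    have hgfilt : ∀ c : Fin B, Finset.univ.filter (fun m : Fin M => d m ∈ I c)
        = Finset.univ.filter (fun m : Fin M => g m = c) := by
      intro c
      ext m
      simp only [Finset.mem_filter, Finset.mem_univ, true_and]
      constructor
      · intro h; exact huniq (hgmem m) h
      · intro h; rw [← h]; exact hgmem m
    have hcard : ∑ c : Fin B, (((Finset.univ.filter (fun m : Fin M => d m ∈ I c)).card : ℝ)) = M := by
      have := Finset.card_eq_sum_card_fiberwise
        (s := (Finset.univ : Finset (Fin M))) (t := (Finset.univ : Finset (Fin B)))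
        (f := g) (fun x _ => Finset.mem_univ (g x))
      have h2 : ∑ c : Fin B, ((Finset.univ.filter (fun m : Fin M => d m ∈ I c)).card) = M := by
        simp only [hgfilt]
        rw [← this, Finset.card_univ, Fintype.card_fin]
      exact_mod_cast h2
    have hsum : (∑ k, u k) = ∑ k, w k := by
      have hfib : (∑ k, u k)
          = ∑ c : Fin B, ∑ j ∈ Finset.univ.filter (fun j : Fin J => f j = c), u j := by
        rw [Finset.sum_fiberwise]
      rw [hfib]
      have : ∀ c : Fin B, (∑ j ∈ Finset.univ.filter (fun j : Fin J => f j = c), u j)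
          = (((Finset.univ.filter (fun m : Fin M => d m ∈ I c)).card : ℝ) / M) * ∑ k, w k := by
        intro c; rw [← hfilt c]; exact hT c
      rw [Finset.sum_congr rfl (fun c _ => this c), ← Finset.sum_mul, ← Finset.sum_div, hcard]
      field_simp
    rw [hT b, hsum]
end
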